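/- Dynamic-versus-static oracle gap within a low-variation batch. Let S be a nonempty finite set of time periods, [K] a nonempty finite set of arms, μ : S × [K] → ℝ, and V ≥ 0. Suppose that for every arm k ∈ [K] and all t_1, t_2 ∈ S, |μ(t_1,k) − μ(t_2,k)| ≤ V. Then Σ_{t∈S} max_{k∈[K]} μ(t,k) − max_{k∈[K]} Σ_{t∈S} μ(t,k) ≤ 2 V |S|. -/
import Mathlib


/-- **Dynamic-versus-static oracle gap within a low-variation batch.**
If every arm's mean reward varies by at most `V` within the batch `S`, then the
dynamic oracle exceeds the static oracle on `S` by at most `2V|S|`. -/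
theorem dynamic_static_oracle_gap {τ ι : Type*} [Fintype ι] [Nonempty ι]
    (S : Finset τ) (hS : S.Nonempty) (μ : τ → ι → ℝ) (V : ℝ) (hV : 0 ≤ V)
    (hvar : ∀ k : ι, ∀ t₁ ∈ S, ∀ t₂ ∈ S, |μ t₁ k - μ t₂ k| ≤ V) :
    (∑ t ∈ S, ⨆ k : ι, μ t k) - (⨆ k : ι, ∑ t ∈ S, μ t k) ≤ 2 * V * S.card := by
  obtain ⟨t0, ht0⟩ := hS
  obtain ⟨k0, hk0⟩ := Finite.exists_max (μ t0)
  have hub : (∑ t ∈ S, ⨆ k : ι, μ t k) ≤ ∑ t ∈ S, (μ t0 k0 + V) := by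
    refine Finset.sum_le_sum fun t ht => ciSup_le fun k => ?_
    have h := abs_le.mp (hvar k t ht t0 ht0)
    have := hk0 k
    linarith [h.2]
  have hlb : ∑ t ∈ S, (μ t0 k0 - V) ≤ ⨆ k : ι, ∑ t ∈ S, μ t k := by
    refine le_trans ?_ (le_ciSup (Finite.bddAbove_range _) k0)
    refine Finset.sum_le_sum fun t ht => ?_
    have h := abs_le.mp (hvar k0 t ht t0 ht0)
    linarith [h.1]
  have h1 : ∑ t ∈ S, (μ t0 k0 + V) = (μ t0 k0 + V) * S.card := by
    rw [Finset.sum_const]; ring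
  have h2 : ∑ t ∈ S, (μ t0 k0 - V) = (μ t0 k0 - V) * S.card := by
    rw [Finset.sum_const]; ring
  rw [h1] at hub
  rw [h2] at hlb
  nlinarith [hub, hlb]
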